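/- arXiv:1711.00091 — 3 statements merged into one kernel-verified Lean document; each statement's English description precedes it below -/
import Mathlib

section
/- Let $W$ be a Bessel fusion sequence with bound $B_W$ and $V$ a fusion frame with bounds $A_V\le B_V$ in $\mathcal{H}$, and $U\in B(\mathcal{H})$. Then the $U$-fusion cross Gram matrix $\mathcal{G}_{U,W,V} = \phi_{WV}T_V^*UT_W$ is a well-defined bounded operator on $(\sum_{i\in I}\oplus W_i)_{\ell^2}$ with $\|\mathcal{G}_{U,W,V}\| \le \frac{\sqrt{B_W B_V}}{A_V}\|U\|$. -/
open scoped InnerProductSpace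
open ContinuousLinearMap (adjoint)
set_option maxHeartbeats 1000000
set_option synthInstance.maxHeartbeats 400000
noncomputable section

variable {H : Type*} [NormedAddCommGroup H] [InnerProductSpace ℂ H] [CompleteSpace H]
variable {ι : Type*} [Countable ι]

/-- The orthogonal projection onto a closed subspace, as an endomorphism of `H`. -/
noncomputable def projL (W : Submodule ℂ H) [CompleteSpace W] : H →L[ℂ] H :=
  W.subtypeL.comp (Submodule.orthogonalProjectionOnto W)

/-- `{(W i, ω i)}` is a fusion frame with bounds `A ≤ B`. -/
def IsFusionFrame (W : ι → Submodule ℂ H) [∀ i, CompleteSpace (W i)]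
    (ω : ι → ℝ) (A B : ℝ) : Prop :=
  ∀ f : H, ∃ s : ℝ,
    HasSum (fun i => (ω i) ^ 2 * ‖(Submodule.orthogonalProjectionOnto (W i) f : H)‖ ^ 2) s ∧
    A * ‖f‖ ^ 2 ≤ s ∧ s ≤ B * ‖f‖ ^ 2

/-- `{(W i, ω i)}` is a Bessel fusion sequence with bound `B`. -/
def IsBesselFusion (W : ι → Submodule ℂ H) [∀ i, CompleteSpace (W i)]
    (ω : ι → ℝ) (B : ℝ) : Prop :=
  ∀ f : H, ∃ s : ℝ,
    HasSum (fun i => (ω i) ^ 2 * ‖(Submodule.orthogonalProjectionOnto (W i) f : H)‖ ^ 2) s ∧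
    s ≤ B * ‖f‖ ^ 2

/-- `{(W i, ω i)}` is a fusion Riesz basis with bounds `C ≤ D`. -/
def IsFusionRieszBasisWith (W : ι → Submodule ℂ H) (ω : ι → ℝ) (C D : ℝ) : Prop :=
  (⨆ i, W i).topologicalClosure = ⊤ ∧ 0 < C ∧ C ≤ D ∧
  ∀ (J : Finset ι) (g : ∀ i, W i),
    C * ∑ j ∈ J, ‖(g j : H)‖ ^ 2 ≤ ‖∑ j ∈ J, ω j • ((g j : H))‖ ^ 2 ∧
    ‖∑ j ∈ J, ω j • ((g j : H))‖ ^ 2 ≤ D * ∑ j ∈ J, ‖(g j : H)‖ ^ 2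

/-- `{(W i, ω i)}` is a fusion Riesz basis. -/
def IsFusionRieszBasis (W : ι → Submodule ℂ H) (ω : ι → ℝ) : Prop :=
  ∃ C D : ℝ, IsFusionRieszBasisWith W ω C D

end

/-! The Gram operator is the composite `φ_{WV} ∘ T_V^* ∘ U ∘ T_W`, so it suffices to bound each
factor. The adjoint of a synthesis operator is the analysis operator `g ↦ (ω_i π_{W_i} g)_i`, whose
squared norm is the Bessel sum; hence `‖T_W‖ ≤ √B_W` and `‖T_V‖ ≤ √B_V`. The lower frame bound
gives `A_V ‖g‖² ≤ Re ⟪S_V g, g⟫ ≤ ‖S_V g‖ ‖g‖`, so `‖S_V⁻¹‖ ≤ 1 / A_V`, and `‖φ_{WV}‖ ≤ ‖S_V⁻¹‖`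
coordinatewise because orthogonal projections are contractions. -/

open Submodule (orthogonalProjectionOnto)

theorem lp.norm_le_mul_of_forall_norm_le {α : Type*} {E F : α → Type*}
    [∀ i, NormedAddCommGroup (E i)] [∀ i, NormedAddCommGroup (F i)] [∀ i, NormedSpace ℝ (F i)]
    {p : ENNReal} [Fact (1 ≤ p)] {C : ℝ} (hC : 0 ≤ C) {x : lp E p} {y : lp F p}
    (h : ∀ i, ‖x i‖ ≤ C * ‖y i‖) : ‖x‖ ≤ C * ‖y‖ :=
  calc ‖x‖ ≤ ‖C • y‖ :=
        lp.norm_mono (zero_lt_one.trans_le Fact.out).ne' fun i => by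
          rw [lp.coeFn_smul, Pi.smul_apply, norm_smul, Real.norm_of_nonneg hC]
          exact h i
    _ = C * ‖y‖ := by rw [norm_smul, Real.norm_of_nonneg hC]

theorem ContinuousLinearMap.norm_le_inv_of_comp_eq_one {𝕜 E : Type*} [NontriviallyNormedField 𝕜]
    [NormedAddCommGroup E] [NormedSpace 𝕜 E] {S R : E →L[𝕜] E} (hSR : S.comp R = 1) {A : ℝ}
    (hA : 0 < A) (hS : ∀ x, A * ‖x‖ ≤ ‖S x‖) : ‖R‖ ≤ A⁻¹ := by
  refine ContinuousLinearMap.opNorm_le_bound _ (inv_nonneg.2 hA.le) fun x => ?_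
  have hx : S (R x) = x := by simpa using congr($hSR x)
  rw [inv_mul_eq_div, le_div_iff₀' hA]
  simpa only [hx] using hS (R x)

section Fusion

variable {H : Type*} [NormedAddCommGroup H] [InnerProductSpace ℂ H] {ι : Type*}

section FrameOperator

variable {V : ι → Submodule ℂ H} [∀ i, CompleteSpace (V i)] {v : ι → ℝ} {S : H →L[ℂ] H}

theorem IsFusionFrame.isBesselFusion {A B : ℝ} (hV : IsFusionFrame V v A B) :
    IsBesselFusion V v B :=
  fun f => (hV f).imp fun _ h => ⟨h.1, h.2.2⟩

theorem hasSum_re_inner_frameOp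
    (hS : ∀ f, HasSum (fun i => (v i) ^ 2 • ((orthogonalProjectionOnto (V i) f : H))) (S f))
    (g : H) :
    HasSum (fun i => (v i) ^ 2 * ‖(orthogonalProjectionOnto (V i) g : H)‖ ^ 2)
      (RCLike.re ⟪S g, g⟫_ℂ) := by
  have hterm : ∀ i, RCLike.re ⟪g, (v i) ^ 2 • (orthogonalProjectionOnto (V i) g : H)⟫_ℂ
      = (v i) ^ 2 * ‖(orthogonalProjectionOnto (V i) g : H)‖ ^ 2 := fun i => by
    rw [RCLike.real_smul_eq_coe_smul (K := ℂ), inner_smul_right, RCLike.re_ofReal_mul,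
      inner_re_symm, ← Submodule.starProjection_apply,
      Submodule.re_inner_starProjection_eq_normSq]
    rfl
  rw [inner_re_symm, ← funext hterm]
  exact ((hS g).mapL (innerSL ℂ g)).mapL RCLike.reCLM

theorem IsFusionFrame.mul_norm_le_norm_frameOp {A B : ℝ} (hV : IsFusionFrame V v A B)
    (hS : ∀ f, HasSum (fun i => (v i) ^ 2 • ((orthogonalProjectionOnto (V i) f : H))) (S f))
    (g : H) : A * ‖g‖ ≤ ‖S g‖ := by
  obtain ⟨s, hs, hAs, -⟩ := hV g
  have hs_le : s ≤ ‖S g‖ * ‖g‖ :=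
    (hasSum_re_inner_frameOp hS g).unique hs ▸ re_inner_le_norm (S g) g
  rcases (norm_nonneg g).eq_or_lt with hg | hg
  · rw [← hg]; simp
  · nlinarith

end FrameOperator

theorem norm_le_of_coe_apply_eq_orthogonalProjectionOnto
    {W V : ι → Submodule ℂ H} [∀ i, CompleteSpace (W i)] {R : H →L[ℂ] H}
    {φ : lp (fun i => ↥(V i)) 2 →L[ℂ] lp (fun i => ↥(W i)) 2}
    (hφ : ∀ f i, ((φ f) i : H) = (orthogonalProjectionOnto (W i) (R (f i)) : H)) :
    ‖φ‖ ≤ ‖R‖ :=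
  ContinuousLinearMap.opNorm_le_bound _ (norm_nonneg R) fun f =>
    lp.norm_le_mul_of_forall_norm_le (norm_nonneg R) fun i =>
      calc ‖((φ f) i : H)‖ = ‖(orthogonalProjectionOnto (W i) (R (f i)) : H)‖ := by rw [hφ]
        _ ≤ ‖R (f i)‖ := Submodule.norm_orthogonalProjectionOnto_apply_le _ _
        _ ≤ ‖R‖ * ‖f i‖ := R.le_opNorm _

section Synthesis

variable {W : ι → Submodule ℂ H} {ω : ι → ℝ} {T : lp (fun i => ↥(W i)) 2 →L[ℂ] H}

theorem synthesis_lp_single (hT : ∀ f, HasSum (fun i => ω i • ((f i : H))) (T f))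
    [DecidableEq ι] (i : ι) (u : W i) : T (lp.single 2 i u) = ω i • (u : H) := by
  refine ((hT _).unique (hasSum_single i fun j hj => ?_)).trans ?_
  · simp [Pi.single_eq_of_ne hj]
  · simp

variable [CompleteSpace H] [∀ i, CompleteSpace (W i)]

theorem adjoint_synthesis_apply (hT : ∀ f, HasSum (fun i => ω i • ((f i : H))) (T f))
    (g : H) (i : ι) : adjoint T g i = ω i • orthogonalProjectionOnto (W i) g := by
  classical
  refine ext_inner_right ℂ fun u => ?_
  rw [← lp.inner_single_right, ContinuousLinearMap.adjoint_inner_left, synthesis_lp_single hT,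
    RCLike.real_smul_eq_coe_smul (K := ℂ), RCLike.real_smul_eq_coe_smul (K := ℂ),
    inner_smul_right, inner_smul_left, RCLike.conj_ofReal,
    Submodule.inner_orthogonalProjectionOnto_eq_of_mem_right]

theorem IsBesselFusion.norm_synthesis_le {B : ℝ} (hW : IsBesselFusion W ω B)
    (hT : ∀ f, HasSum (fun i => ω i • ((f i : H))) (T f)) : ‖T‖ ≤ Real.sqrt B := by
  rw [← ContinuousLinearMap.adjoint.norm_map T]
  refine ContinuousLinearMap.opNorm_le_bound _ (Real.sqrt_nonneg B) fun g => ?_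
  obtain ⟨s, hs, hsB⟩ := hW g
  have hsq : HasSum (fun i => ω i ^ 2 * ‖(orthogonalProjectionOnto (W i) g : H)‖ ^ 2)
      (‖adjoint T g‖ ^ 2) := by
    have := lp.hasSum_norm (p := 2) (by norm_num) (adjoint T g)
    simp only [ENNReal.toReal_ofNat, Real.rpow_two, adjoint_synthesis_apply hT, norm_smul,
      Real.norm_eq_abs, mul_pow, sq_abs] at this
    exact this
  rw [← Real.sqrt_sq (norm_nonneg (adjoint T g)), ← Real.sqrt_sq (norm_nonneg g),
    ← Real.sqrt_mul' _ (sq_nonneg _)]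
  exact Real.sqrt_le_sqrt (hsq.unique hs ▸ hsB)

end Synthesis

end Fusion

variable {H : Type*} [NormedAddCommGroup H] [InnerProductSpace ℂ H] [CompleteSpace H]
variable {ι : Type*} [Countable ι]

theorem stmt9_general (W V : ι → Submodule ℂ H)
    [∀ i, CompleteSpace (W i)] [∀ i, CompleteSpace (V i)]
    (ω v : ι → ℝ)
    (BW AV BV : ℝ) (hAV : 0 < AV) (hAVBV : AV ≤ BV)
    (hBessel : IsBesselFusion W ω BW)
    (hframeV : IsFusionFrame V v AV BV)
    (U : H →L[ℂ] H)
    (TW : lp (fun i => ↥(W i)) 2 →L[ℂ] H)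
    (hTW : ∀ f, HasSum (fun i => ω i • ((f i : H))) (TW f))
    (TV : lp (fun i => ↥(V i)) 2 →L[ℂ] H)
    (hTV : ∀ f, HasSum (fun i => v i • ((f i : H))) (TV f))
    (SV SVinv : H →L[ℂ] H)
    (hSV : ∀ f, HasSum (fun i => (v i) ^ 2 • ((Submodule.orthogonalProjectionOnto (V i) f : H))) (SV f))
    (hSVinv : SV.comp SVinv = 1 ∧ SVinv.comp SV = 1)
    (φ : lp (fun i => ↥(V i)) 2 →L[ℂ] lp (fun i => ↥(W i)) 2)
    (hφ : ∀ f i, ((φ f) i : H) = (Submodule.orthogonalProjectionOnto (W i) (SVinv ((f i : H))) : H)) :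
    ‖φ ∘L (adjoint TV) ∘L U ∘L TW‖ ≤ Real.sqrt (BW * BV) / AV * ‖U‖ := by
  have hφ_le : ‖φ‖ ≤ AV⁻¹ :=
    (norm_le_of_coe_apply_eq_orthogonalProjectionOnto hφ).trans <|
      ContinuousLinearMap.norm_le_inv_of_comp_eq_one hSVinv.1 hAV
        (hframeV.mul_norm_le_norm_frameOp hSV)
  have hTV_le : ‖adjoint TV‖ ≤ Real.sqrt BV := by
    rw [ContinuousLinearMap.adjoint.norm_map]
    exact hframeV.isBesselFusion.norm_synthesis_le hTV
  have hTW_le : ‖TW‖ ≤ Real.sqrt BW := hBessel.norm_synthesis_le hTW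
  calc ‖φ ∘L (adjoint TV) ∘L U ∘L TW‖ ≤ ‖φ‖ * (‖adjoint TV‖ * (‖U‖ * ‖TW‖)) := by
        refine (ContinuousLinearMap.opNorm_comp_le _ _).trans ?_
        gcongr
        refine (ContinuousLinearMap.opNorm_comp_le _ _).trans ?_
        gcongr
        exact ContinuousLinearMap.opNorm_comp_le _ _
    _ ≤ AV⁻¹ * (Real.sqrt BV * (‖U‖ * Real.sqrt BW)) := by gcongr
    _ = Real.sqrt (BW * BV) / AV * ‖U‖ := by
        rw [Real.sqrt_mul' BW (hAV.le.trans hAVBV)]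
        ring

/-- the `U`-fusion cross Gram matrix `𝒢_{U,W,V} = φ_{WV} T_V^* U T_W` is a
bounded operator on `(∑ᵢ ⊕ Wᵢ)_{ℓ²}` with `‖𝒢_{U,W,V}‖ ≤ √(B_W B_V)/A_V · ‖U‖`. -/
theorem stmt9 (W V : ι → Submodule ℂ H)
    [∀ i, CompleteSpace (W i)] [∀ i, CompleteSpace (V i)]
    (ω v : ι → ℝ) (hω : ∀ i, 0 < ω i) (hv : ∀ i, 0 < v i)
    (BW AV BV : ℝ) (hBW : 0 < BW) (hAV : 0 < AV) (hAVBV : AV ≤ BV)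
    (hBessel : IsBesselFusion W ω BW)
    (hframeV : IsFusionFrame V v AV BV)
    (U : H →L[ℂ] H)
    (TW : lp (fun i => ↥(W i)) 2 →L[ℂ] H)
    (hTW : ∀ f, HasSum (fun i => ω i • ((f i : H))) (TW f))
    (TV : lp (fun i => ↥(V i)) 2 →L[ℂ] H)
    (hTV : ∀ f, HasSum (fun i => v i • ((f i : H))) (TV f))
    (SV SVinv : H →L[ℂ] H)
    (hSV : ∀ f, HasSum (fun i => (v i) ^ 2 • ((Submodule.orthogonalProjectionOnto (V i) f : H))) (SV f))
    (hSVinv : SV.comp SVinv = 1 ∧ SVinv.comp SV = 1)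
    (φ : lp (fun i => ↥(V i)) 2 →L[ℂ] lp (fun i => ↥(W i)) 2)
    (hφ : ∀ f i, ((φ f) i : H) = (Submodule.orthogonalProjectionOnto (W i) (SVinv ((f i : H))) : H)) :
    ‖φ ∘L (adjoint TV) ∘L U ∘L TW‖ ≤ Real.sqrt (BW * BV) / AV * ‖U‖ :=
  stmt9_general W V ω v BW AV BV hAV hAVBV hBessel hframeV U TW hTW TV hTV SV SVinv hSV hSVinv φ hφ
end

section
/- If $V$ is a dual fusion frame of $W$, then the fusion cross Gram matrix $\mathcal{G}_{V,W} = \phi_{VW}T_W^*T_V$ satisfies $\mathcal{G}_{V,W}^2 = \mathcal{G}_{V,W}$ (it is an oblique projection), and moreover $T_V\mathcal{G}_{V,W} = T_V$, $\mathcal{G}_{V,W}\phi_{VW}T_W^* = \phi_{VW}T_W^*$, and $\ker\mathcal{G}_{V,W} = \ker T_V$. -/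
open scoped InnerProductSpace
open ContinuousLinearMap (adjoint)
set_option maxHeartbeats 1000000
set_option synthInstance.maxHeartbeats 400000
noncomputable section

variable {H : Type*} [NormedAddCommGroup H] [InnerProductSpace ℂ H] [CompleteSpace H]
variable {ι : Type*} [Countable ι]

/-! With `P = φ_{VW} T_W^*`, duality says that `T_V P = 1`, so `𝒢_{V,W} = P T_V` is a right
inverse composed with its left inverse. Associativity alone then gives every identity:
`𝒢² = P (T_V P) T_V = 𝒢`, `T_V 𝒢 = T_V`, `𝒢 P = P`, and `ker 𝒢 = ker T_V` because `T_V 𝒢 = T_V`. -/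

namespace ContinuousLinearMap

variable {R M N : Type*} [Semiring R]
  [TopologicalSpace M] [AddCommMonoid M] [Module R M]
  [TopologicalSpace N] [AddCommMonoid N] [Module R N]
  {T : M →L[R] N} {P : N →L[R] M}

theorem comp_comp_cancel_left_of_comp_eq_one (h : T ∘L P = 1) : T ∘L P ∘L T = T := by
  rw [← comp_assoc, h, one_def, id_comp]

theorem comp_comp_cancel_right_of_comp_eq_one (h : T ∘L P = 1) : P ∘L T ∘L P = P := by
  rw [← comp_assoc, comp_assoc P, h, one_def, comp_id]

theorem comp_idem_of_comp_eq_one (h : T ∘L P = 1) : (P ∘L T) ∘L (P ∘L T) = P ∘L T := by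
  rw [comp_assoc, comp_comp_cancel_left_of_comp_eq_one h]

theorem ker_comp_eq_of_comp_eq_one (h : T ∘L P = 1) :
    LinearMap.ker (P ∘L T : M →ₗ[R] M) = LinearMap.ker (T : M →ₗ[R] N) := by
  ext x
  simp only [LinearMap.mem_ker, coe_coe, coe_comp, Function.comp_apply]
  refine ⟨fun hx => ?_, fun hx => by rw [hx, map_zero]⟩
  rw [← comp_comp_cancel_left_of_comp_eq_one h, comp_apply, comp_apply, hx, map_zero]

end ContinuousLinearMap

theorem stmt11_general (W V : ι → Submodule ℂ H)
    [∀ i, CompleteSpace (W i)]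
    (TW : lp (fun i => ↥(W i)) 2 →L[ℂ] H)
    (TV : lp (fun i => ↥(V i)) 2 →L[ℂ] H)
    (φVW : lp (fun i => ↥(W i)) 2 →L[ℂ] lp (fun i => ↥(V i)) 2)
    (hdual : TV ∘L φVW ∘L (adjoint TW) = 1) :
    (φVW ∘L (adjoint TW) ∘L TV) ∘L (φVW ∘L (adjoint TW) ∘L TV) =
      φVW ∘L (adjoint TW) ∘L TV ∧
    TV ∘L (φVW ∘L (adjoint TW) ∘L TV) = TV ∧
    (φVW ∘L (adjoint TW) ∘L TV) ∘L (φVW ∘L (adjoint TW)) = φVW ∘L (adjoint TW) ∧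
    LinearMap.ker ((φVW ∘L (adjoint TW) ∘L TV : lp (fun i => ↥(V i)) 2 →L[ℂ] lp (fun i => ↥(V i)) 2) :
      lp (fun i => ↥(V i)) 2 →ₗ[ℂ] lp (fun i => ↥(V i)) 2) = LinearMap.ker (TV : lp (fun i => ↥(V i)) 2 →ₗ[ℂ] H) := by
  open ContinuousLinearMap in
  rw [← comp_assoc φVW]
  exact ⟨comp_idem_of_comp_eq_one hdual, comp_comp_cancel_left_of_comp_eq_one hdual,
    comp_comp_cancel_right_of_comp_eq_one hdual, ker_comp_eq_of_comp_eq_one hdual⟩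

/-- if `V` is a dual fusion frame of `W`, then `𝒢_{V,W} = φ_{VW} T_W^* T_V`
is an (oblique) projection, `T_V 𝒢_{V,W} = T_V`, `𝒢_{V,W} φ_{VW} T_W^* = φ_{VW} T_W^*`,
and `ker 𝒢_{V,W} = ker T_V`. -/
theorem stmt11 (W V : ι → Submodule ℂ H)
    [∀ i, CompleteSpace (W i)] [∀ i, CompleteSpace (V i)]
    (ω v : ι → ℝ) (hω : ∀ i, 0 < ω i) (hv : ∀ i, 0 < v i)
    (AW BW BV : ℝ) (hAW : 0 < AW)
    (hframeW : IsFusionFrame W ω AW BW) (hBesselV : IsBesselFusion V v BV)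
    (TW : lp (fun i => ↥(W i)) 2 →L[ℂ] H)
    (hTW : ∀ f, HasSum (fun i => ω i • ((f i : H))) (TW f))
    (TV : lp (fun i => ↥(V i)) 2 →L[ℂ] H)
    (hTV : ∀ f, HasSum (fun i => v i • ((f i : H))) (TV f))
    (SW SWinv : H →L[ℂ] H)
    (hSW : ∀ f, HasSum (fun i => (ω i) ^ 2 • ((Submodule.orthogonalProjectionOnto (W i) f : H))) (SW f))
    (hSWinv : SW.comp SWinv = 1 ∧ SWinv.comp SW = 1)
    (φVW : lp (fun i => ↥(W i)) 2 →L[ℂ] lp (fun i => ↥(V i)) 2)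
    (hφVW : ∀ f i, ((φVW f) i : H) = (Submodule.orthogonalProjectionOnto (V i) (SWinv ((f i : H))) : H))
    (hdual : TV ∘L φVW ∘L (adjoint TW) = 1) :
    (φVW ∘L (adjoint TW) ∘L TV) ∘L (φVW ∘L (adjoint TW) ∘L TV) =
      φVW ∘L (adjoint TW) ∘L TV ∧
    TV ∘L (φVW ∘L (adjoint TW) ∘L TV) = TV ∧
    (φVW ∘L (adjoint TW) ∘L TV) ∘L (φVW ∘L (adjoint TW)) = φVW ∘L (adjoint TW) ∧
    LinearMap.ker ((φVW ∘L (adjoint TW) ∘L TV : lp (fun i => ↥(V i)) 2 →L[ℂ] lp (fun i => ↥(V i)) 2) :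
      lp (fun i => ↥(V i)) 2 →ₗ[ℂ] lp (fun i => ↥(V i)) 2) = LinearMap.ker (TV : lp (fun i => ↥(V i)) 2 →ₗ[ℂ] H) :=
  stmt11_general W V TW TV φVW hdual
end
end

section
/- Let $V$ be a dual fusion frame of $W$ and $U\in B(\mathcal{H})$ invertible. If $\mathcal{G}_{U,V,W} = \phi_{VW}T_W^*UT_V$ is invertible, then $V$ is a fusion Riesz basis and $\mathcal{G}_{U,V,W}^{-1} = \mathcal{G}_{U^{-1},V,W}$. -/
open scoped InnerProductSpace
open ContinuousLinearMap (adjoint)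
set_option maxHeartbeats 1000000
set_option synthInstance.maxHeartbeats 400000
noncomputable section

variable {H : Type*} [NormedAddCommGroup H] [InnerProductSpace ℂ H] [CompleteSpace H]
variable {ι : Type*} [Countable ι]

/-!
Write `Φ = φ_{VW} T_W^*`, so that duality reads `T_V Φ = 1`. Then
`𝒢_U 𝒢_{U⁻¹} 𝒢_U = Φ U (T_V Φ) U⁻¹ (T_V Φ) U T_V = 𝒢_U`, and cancelling the invertible `𝒢_U`
on either side shows that `𝒢_{U⁻¹}` is its inverse. Moreover `𝒢_U⁻¹ Φ U` is a bounded left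
inverse and `Φ` a right inverse of the synthesis operator `T_V`; so `T_V` is bounded below and
onto, which gives the Riesz bounds and the completeness of `V`.
-/

open ContinuousLinearMap

theorem mul_eq_one_and_mul_eq_one_of_mul_mul_self {M : Type*} [Monoid M] {a b x : M}
    (hab : a * b = 1) (hba : b * a = 1) (hx : a * x * a = a) : a * x = 1 ∧ x * a = 1 :=
  ⟨by rw [← mul_one (a * x), ← hab, ← mul_assoc, hx, hab],
   by rw [← one_mul (x * a), ← hba, mul_assoc, ← mul_assoc a, hx, hba]⟩

theorem comp_comp_comp_self_of_comp_eq_one {R E F : Type*} [Semiring R]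
    [TopologicalSpace E] [AddCommMonoid E] [Module R E]
    [TopologicalSpace F] [AddCommMonoid F] [Module R F]
    {Φ : F →L[R] E} {T : E →L[R] F} {U U' : F →L[R] F}
    (hΦ : T ∘L Φ = 1) (hU : U ∘L U' = 1) :
    (Φ ∘L U ∘L T) ∘L (Φ ∘L U' ∘L T) ∘L (Φ ∘L U ∘L T) = Φ ∘L U ∘L T := by
  have hTΦ : ∀ y, T (Φ y) = y := fun y => by simpa using DFunLike.congr_fun hΦ y
  have hUU' : ∀ y, U (U' y) = y := fun y => by simpa using DFunLike.congr_fun hU y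
  ext x
  simp only [comp_apply, hTΦ, hUU']

theorem lp.norm_sum_single_two_sq {α : Type*} [DecidableEq α] {E : α → Type*}
    [∀ i, NormedAddCommGroup (E i)] (g : ∀ i, E i) (J : Finset α) :
    ‖∑ j ∈ J, lp.single 2 j (g j)‖ ^ 2 = ∑ j ∈ J, ‖g j‖ ^ 2 := by
  simpa using lp.norm_sum_single (p := 2) (by norm_num) g J

theorem lp.sum_single_apply {α : Type*} [DecidableEq α] {E : α → Type*}
    [∀ i, NormedAddCommGroup (E i)] (p : ENNReal) (g : ∀ i, E i) (J : Finset α) (i : α) :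
    (∑ j ∈ J, lp.single p j (g j)) i = if i ∈ J then g i else 0 := by
  rw [lp.coeFn_sum, Finset.sum_apply]
  simp only [lp.coeFn_single, Finset.sum_pi_single]

section Synthesis

variable {E : Type*} [NormedAddCommGroup E] [InnerProductSpace ℂ E] {α : Type*}
  {V : α → Submodule ℂ E} {v : α → ℝ} {T : lp (fun i => V i) 2 →L[ℂ] E}

theorem synthesis_sum_single [DecidableEq α]
    (hT : ∀ f, HasSum (fun i => v i • (f i : E)) (T f)) (g : ∀ i, V i) (J : Finset α) :
    T (∑ j ∈ J, lp.single 2 j (g j)) = ∑ j ∈ J, v j • (g j : E) := by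
  refine (hT _).unique ?_
  simp_rw [lp.sum_single_apply]
  have hzero : ∀ i ∉ J, v i • ((if i ∈ J then g i else 0 : V i) : E) = 0 := fun i hi => by
    simp [hi]
  convert hasSum_sum_of_ne_finset_zero (L := SummationFilter.unconditional α) hzero using 1
  exact Finset.sum_congr rfl fun i hi => by simp [hi]

theorem synthesis_mem_topologicalClosure_iSup
    (hT : ∀ f, HasSum (fun i => v i • (f i : E)) (T f)) (f : lp (fun i => V i) 2) :
    T f ∈ (⨆ i, V i).topologicalClosure := by
  refine (Submodule.isClosed_topologicalClosure _).mem_of_tendsto (hT f) ?_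
  filter_upwards with J
  refine Submodule.sum_mem _ fun i _ => Submodule.le_topologicalClosure _ ?_
  refine Submodule.mem_iSup_of_mem i ?_
  rw [← algebraMap_smul ℂ (v i) ((f i : E))]
  exact Submodule.smul_mem _ _ (f i).2

theorem isFusionRieszBasisWith_of_synthesis_bounds
    (hT : ∀ f, HasSum (fun i => v i • (f i : E)) (T f))
    (hdense : (⨆ i, V i).topologicalClosure = ⊤) {C D : ℝ} (hC : 0 < C) (hCD : C ≤ D)
    (hbounds : ∀ f, C * ‖f‖ ^ 2 ≤ ‖T f‖ ^ 2 ∧ ‖T f‖ ^ 2 ≤ D * ‖f‖ ^ 2) :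
    IsFusionRieszBasisWith V v C D := by
  classical
  refine ⟨hdense, hC, hCD, fun J g => ?_⟩
  have hJ := hbounds (∑ j ∈ J, lp.single 2 j (g j))
  rwa [synthesis_sum_single hT, lp.norm_sum_single_two_sq] at hJ

theorem isFusionRieszBasis_of_synthesis_invertible
    (hT : ∀ f, HasSum (fun i => v i • (f i : E)) (T f))
    {L : E →L[ℂ] lp (fun i => V i) 2} {R : E →L[ℂ] lp (fun i => V i) 2}
    (hL : L ∘L T = 1) (hR : T ∘L R = 1) : IsFusionRieszBasis V v := by
  have hdense : (⨆ i, V i).topologicalClosure = ⊤ := by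
    refine Submodule.eq_top_iff'.2 fun x => ?_
    have hTR : T (R x) = x := by simpa using DFunLike.congr_fun hR x
    simpa only [hTR] using synthesis_mem_topologicalClosure_iSup hT (R x)
  have hlower : ∀ f, ‖f‖ ^ 2 ≤ (‖L‖ ^ 2 + 1) * ‖T f‖ ^ 2 := fun f => by
    have hf : ‖f‖ ≤ ‖L‖ * ‖T f‖ :=
      calc ‖f‖ = ‖L (T f)‖ := by simpa using congr(‖$(DFunLike.congr_fun hL f)‖).symm
        _ ≤ ‖L‖ * ‖T f‖ := L.le_opNorm (T f)
    nlinarith [norm_nonneg f, norm_nonneg (T f), norm_nonneg L]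
  have hupper : ∀ f, ‖T f‖ ^ 2 ≤ ‖T‖ ^ 2 * ‖f‖ ^ 2 := fun f => by
    rw [← mul_pow]
    exact pow_le_pow_left₀ (norm_nonneg _) (T.le_opNorm f) 2
  refine ⟨(‖L‖ ^ 2 + 1)⁻¹, max (‖T‖ ^ 2) (‖L‖ ^ 2 + 1)⁻¹,
    isFusionRieszBasisWith_of_synthesis_bounds hT hdense (by positivity) (le_max_right _ _)
      fun f => ⟨?_, (hupper f).trans ?_⟩⟩
  · rw [inv_mul_le_iff₀ (by positivity)]
    exact hlower f
  · exact mul_le_mul_of_nonneg_right (le_max_left _ _) (by positivity)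

end Synthesis

theorem stmt18_general (W V : ι → Submodule ℂ H)
    [∀ i, CompleteSpace (W i)]
    (v : ι → ℝ)
    (U Uinv : H →L[ℂ] H) (hU : U.comp Uinv = 1 ∧ Uinv.comp U = 1)
    (TW : lp (fun i => ↥(W i)) 2 →L[ℂ] H)
    (TV : lp (fun i => ↥(V i)) 2 →L[ℂ] H)
    (hTV : ∀ f, HasSum (fun i => v i • ((f i : H))) (TV f))
    (φVW : lp (fun i => ↥(W i)) 2 →L[ℂ] lp (fun i => ↥(V i)) 2)
    (hdual : TV ∘L φVW ∘L (adjoint TW) = 1)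
    (hG : ∃ Ginv, (φVW ∘L (adjoint TW) ∘L U ∘L TV) ∘L Ginv = 1 ∧
      Ginv ∘L (φVW ∘L (adjoint TW) ∘L U ∘L TV) = 1) :
    IsFusionRieszBasis V v ∧
    (φVW ∘L (adjoint TW) ∘L U ∘L TV) ∘L (φVW ∘L (adjoint TW) ∘L Uinv ∘L TV) = 1 ∧
    (φVW ∘L (adjoint TW) ∘L Uinv ∘L TV) ∘L (φVW ∘L (adjoint TW) ∘L U ∘L TV) = 1 := by
  obtain ⟨Ginv, hGGinv, hGinvG⟩ := hG
  have hGG'G := comp_comp_comp_self_of_comp_eq_one (Φ := φVW ∘L adjoint TW) hdual hU.1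
  refine ⟨isFusionRieszBasis_of_synthesis_invertible hTV (L := Ginv ∘L φVW ∘L adjoint TW ∘L U)
    hGinvG hdual, mul_eq_one_and_mul_eq_one_of_mul_mul_self hGGinv hGinvG hGG'G⟩

/-- if `V` is a dual fusion frame of `W`, `U` invertible, and
`𝒢_{U,V,W} = φ_{VW} T_W^* U T_V` is invertible, then `V` is a fusion Riesz basis and
`𝒢_{U,V,W}⁻¹ = 𝒢_{U⁻¹,V,W}`. -/
theorem stmt18 (W V : ι → Submodule ℂ H)
    [∀ i, CompleteSpace (W i)] [∀ i, CompleteSpace (V i)]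
    (ω v : ι → ℝ) (hω : ∀ i, 0 < ω i) (hv : ∀ i, 0 < v i)
    (AW BW AV BV : ℝ) (hAW : 0 < AW) (hAV : 0 < AV)
    (hframeW : IsFusionFrame W ω AW BW) (hframeV : IsFusionFrame V v AV BV)
    (U Uinv : H →L[ℂ] H) (hU : U.comp Uinv = 1 ∧ Uinv.comp U = 1)
    (TW : lp (fun i => ↥(W i)) 2 →L[ℂ] H)
    (hTW : ∀ f, HasSum (fun i => ω i • ((f i : H))) (TW f))
    (TV : lp (fun i => ↥(V i)) 2 →L[ℂ] H)
    (hTV : ∀ f, HasSum (fun i => v i • ((f i : H))) (TV f))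
    (SW SWinv : H →L[ℂ] H)
    (hSW : ∀ f, HasSum (fun i => (ω i) ^ 2 • ((Submodule.orthogonalProjectionOnto (W i) f : H))) (SW f))
    (hSWinv : SW.comp SWinv = 1 ∧ SWinv.comp SW = 1)
    (φVW : lp (fun i => ↥(W i)) 2 →L[ℂ] lp (fun i => ↥(V i)) 2)
    (hφVW : ∀ f i, ((φVW f) i : H) = (Submodule.orthogonalProjectionOnto (V i) (SWinv ((f i : H))) : H))
    (hdual : TV ∘L φVW ∘L (adjoint TW) = 1)
    (hG : ∃ Ginv, (φVW ∘L (adjoint TW) ∘L U ∘L TV) ∘L Ginv = 1 ∧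
      Ginv ∘L (φVW ∘L (adjoint TW) ∘L U ∘L TV) = 1) :
    IsFusionRieszBasis V v ∧
    (φVW ∘L (adjoint TW) ∘L U ∘L TV) ∘L (φVW ∘L (adjoint TW) ∘L Uinv ∘L TV) = 1 ∧
    (φVW ∘L (adjoint TW) ∘L Uinv ∘L TV) ∘L (φVW ∘L (adjoint TW) ∘L U ∘L TV) = 1 :=
  stmt18_general W V v U Uinv hU TW TV hTV φVW hdual hG
end
end
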